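/- On the generators of the fusion algebra A^f (writing t, t̃ ∈ εAε, u, ũ ∈ e₂Aε, v, ṽ ∈ εAe₂, w, w̃ ∈ e₂Ae₂), the fusion double bracket ⟪-,-⟫_{fus} is given by: ⟪t,t̃⟫_{fus} = 0; ⟪t,e₁₂u⟫_{fus} = (1/2)(e₁⊗te₁₂u − e₁t⊗e₁₂u); ⟪t,ve₂₁⟫_{fus} = (1/2)(ve₂₁t⊗e₁ − ve₂₁⊗te₁); ⟪t,e₁₂we₂₁⟫_{fus} = (1/2)(e₁₂we₂₁t⊗e₁ + e₁⊗te₁₂we₂₁ − e₁₂we₂₁⊗te₁ − e₁t⊗e₁₂we₂₁); ⟪e₁₂u,t⟫_{fus} = (1/2)(e₁₂u⊗e₁t − te₁₂u⊗e₁); ⟪e₁₂u,e₁₂ũ⟫_{fus} = (1/2)(e₁⊗e₁₂ue₁₂ũ − e₁₂ũe₁₂u⊗e₁); ⟪e₁₂u,ve₂₁⟫_{fus} = (1/2)(e₁₂u⊗e₁ve₂₁ − ve₂₁⊗e₁₂ue₁); ⟪e₁₂u,e₁₂we₂₁⟫_{fus} = (1/2)(e₁⊗e₁₂ue₁₂we₂₁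 − e₁₂we₂₁⊗e₁₂ue₁); ⟪ve₂₁,t⟫_{fus} = (1/2)(te₁⊗ve₂₁ − e₁⊗ve₂₁t); ⟪ve₂₁,e₁₂u⟫_{fus} = (1/2)(e₁₂ue₁⊗ve₂₁ − e₁ve₂₁⊗e₁₂u); ⟪ve₂₁,ṽe₂₁⟫_{fus} = (1/2)(ṽe₂₁ve₂₁⊗e₁ − e₁⊗ve₂₁ṽe₂₁); ⟪ve₂₁,e₁₂we₂₁⟫_{fus} = (1/2)(e₁₂we₂₁ve₂₁⊗e₁ − e₁ve₂₁⊗e₁₂we₂₁); ⟪e₁₂we₂₁,t⟫_{fus} = (1/2)(te₁⊗e₁₂we₂₁ + e₁₂we₂₁⊗e₁t − te₁₂we₂₁⊗e₁ − e₁⊗e₁₂we₂₁t); ⟪e₁₂we₂₁,e₁₂u⟫_{fus} = (1/2)(e₁₂ue₁⊗e₁₂we₂₁ − e₁₂ue₁₂we₂₁⊗e₁); ⟪e₁₂we₂₁,ve₂₁⟫_{fus} = (1/2)(e₁₂we₂₁⊗e₁ve₂₁ − e₁⊗e₁₂we₂₁ve₂₁); ⟪e₁₂we₂₁,e₁₂w̃e₂₁⟫_{fus}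 = 0. -/

import Mathlib

/-!
Every generator of `A^f` is a sandwich `x · a · z` with `x ∈ {ε, e₁₂}`, `a ∈ A` and
`z ∈ {ε, e₂₁}`, and both gauge derivations vanish on `ε`, `e₁₂` and `e₂₁`. The Leibniz rule
thus gives `E_s(x a z) = x a e_s ⊗ e_s z − x e_s ⊗ e_s a z`, and the matrix-unit relations of `Ā`
together with the orthogonality of `e₁, e₂` collapse the traces to
`Tr(E₁)(x a z) = [z = ε] (x a z) e₁ ⊗ e₁ − [x = ε] e₁ ⊗ e₁ (x a z)` and
`Tr(E₂)(x a z) = [z = e₂₁] (x a z) ⊗ e₁ − [x = e₁₂] e₁ ⊗ (x a z)`.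
Each of the sixteen values is then a direct substitution into the formula for `⟪-,-⟫_fus`.
-/

open TensorProduct

/-- A double bracket on a `k`-algebra `A` (Van den Bergh): a bilinear map
`A × A → A ⊗ A` which is cyclically antisymmetric and a derivation in its second
argument for the outer bimodule structure on `A ⊗ A`. -/
structure DoubleBracket (k A : Type*) [CommRing k] [Ring A] [Algebra k A] where
  br : A →ₗ[k] A →ₗ[k] A ⊗[k] A
  antisymm : ∀ a b : A, br a b = - (TensorProduct.comm k A A) (br b a)
  deriv : ∀ a b c : A,
    br a (b * c) = br a b * ((1 : A) ⊗ₜ[k] c) + (b ⊗ₜ[k] (1 : A)) * br a c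

section Core

variable (k : Type*) [CommRing k] (A : Type*) [Ring A] [Algebra k A]

/-- The cyclic permutation `x ⊗ y ⊗ z ↦ z ⊗ x ⊗ y` on the triple tensor product. -/
noncomputable def cyc3 : A ⊗[k] (A ⊗[k] A) ≃ₗ[k] A ⊗[k] (A ⊗[k] A) :=
  (TensorProduct.assoc k A A A).symm.trans (TensorProduct.comm k (A ⊗[k] A) A)

variable {k A}

/-- Apply a double bracket (as a bilinear map) to the first tensor factor,
`x ⊗ y ↦ ⟪a, x⟫ ⊗ y`. -/
noncomputable def leftExtOf (br : A →ₗ[k] A →ₗ[k] A ⊗[k] A) (a : A) :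
    A ⊗[k] A →ₗ[k] A ⊗[k] (A ⊗[k] A) :=
  (TensorProduct.assoc k A A A).toLinearMap.comp (TensorProduct.map (br a) LinearMap.id)

/-- The triple bracket associated to (the underlying bilinear map of) a double bracket:
`⟪a,b,c⟫ = ⟪a,⟪b,c⟫'⟫ ⊗ ⟪b,c⟫'' + τ(⟪b,⟪c,a⟫'⟫ ⊗ ⟪c,a⟫'') + τ²(⟪c,⟪a,b⟫'⟫ ⊗ ⟪a,b⟫'')`. -/
noncomputable def tripleOf (br : A →ₗ[k] A →ₗ[k] A ⊗[k] A) (a b c : A) :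
    A ⊗[k] (A ⊗[k] A) :=
  leftExtOf br a (br b c) + cyc3 k A (leftExtOf br b (br c a))
    + cyc3 k A (cyc3 k A (leftExtOf br c (br a b)))

/-- The triple bracket associated to a double bracket. -/
noncomputable def DoubleBracket.triple (D : DoubleBracket k A) (a b c : A) :
    A ⊗[k] (A ⊗[k] A) :=
  tripleOf D.br a b c

end Core

/-- A double bracket is quasi-Poisson over the ground field `k` (i.e. with respect to
the trivial idempotent decomposition `1 = 1`). -/
def DoubleBracket.IsQuasiPoisson {k A : Type*} [Field k] [Ring A] [Algebra k A]
    (D : DoubleBracket k A) : Prop :=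
  ∀ a b c : A, D.triple a b c = (4⁻¹ : k) •
    ((c * a) ⊗ₜ[k] (b ⊗ₜ[k] (1 : A)) - (c * a) ⊗ₜ[k] ((1 : A) ⊗ₜ[k] b)
      - c ⊗ₜ[k] ((a * b) ⊗ₜ[k] (1 : A)) + c ⊗ₜ[k] (a ⊗ₜ[k] b)
      - a ⊗ₜ[k] (b ⊗ₜ[k] c) + a ⊗ₜ[k] ((1 : A) ⊗ₜ[k] (b * c))
      + (1 : A) ⊗ₜ[k] ((a * b) ⊗ₜ[k] c) - (1 : A) ⊗ₜ[k] (a ⊗ₜ[k] (b * c)))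

section Fusion

variable (k : Type*) [Field k] (A : Type*) [Ring A] [Algebra k A]

/-- Relations presenting the extension algebra `Ā = A *_B B̄`, where `B̄ = Mat₂(k) ⊕ kμ`:
`Ā` is generated by the elements of `A` together with two new generators `e₁₂, e₂₁`
subject to `e₁₂e₂₁ = e₁`, `e₂₁e₁₂ = e₂`, `e₁e₁₂ = e₁₂ = e₁₂e₂`, `e₂e₂₁ = e₂₁ = e₂₁e₁`. -/
inductive FusionRel (e1 e2 : A) :
    FreeAlgebra k (A ⊕ Fin 2) → FreeAlgebra k (A ⊕ Fin 2) → Prop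
  | add (a b : A) : FusionRel e1 e2
      (FreeAlgebra.ι k (Sum.inl a) + FreeAlgebra.ι k (Sum.inl b))
      (FreeAlgebra.ι k (Sum.inl (a + b)))
  | smul (c : k) (a : A) : FusionRel e1 e2
      (c • FreeAlgebra.ι k (Sum.inl a)) (FreeAlgebra.ι k (Sum.inl (c • a)))
  | mul (a b : A) : FusionRel e1 e2
      (FreeAlgebra.ι k (Sum.inl a) * FreeAlgebra.ι k (Sum.inl b))
      (FreeAlgebra.ι k (Sum.inl (a * b)))
  | one : FusionRel e1 e2 (FreeAlgebra.ι k (Sum.inl 1)) 1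
  | mul1221 : FusionRel e1 e2
      (FreeAlgebra.ι k (Sum.inr 0) * FreeAlgebra.ι k (Sum.inr 1))
      (FreeAlgebra.ι k (Sum.inl e1))
  | mul2112 : FusionRel e1 e2
      (FreeAlgebra.ι k (Sum.inr 1) * FreeAlgebra.ι k (Sum.inr 0))
      (FreeAlgebra.ι k (Sum.inl e2))
  | e1mul12 : FusionRel e1 e2
      (FreeAlgebra.ι k (Sum.inl e1) * FreeAlgebra.ι k (Sum.inr 0))
      (FreeAlgebra.ι k (Sum.inr 0))
  | mul12e2 : FusionRel e1 e2
      (FreeAlgebra.ι k (Sum.inr 0) * FreeAlgebra.ι k (Sum.inl e2))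
      (FreeAlgebra.ι k (Sum.inr 0))
  | e2mul21 : FusionRel e1 e2
      (FreeAlgebra.ι k (Sum.inl e2) * FreeAlgebra.ι k (Sum.inr 1))
      (FreeAlgebra.ι k (Sum.inr 1))
  | mul21e1 : FusionRel e1 e2
      (FreeAlgebra.ι k (Sum.inr 1) * FreeAlgebra.ι k (Sum.inl e1))
      (FreeAlgebra.ι k (Sum.inr 1))

/-- The extension algebra `Ā = A *_B B̄` of `A` along the pair of idempotents
`(e1, e2)`. -/
abbrev ExtAlg (e1 e2 : A) := RingQuot (FusionRel k A e1 e2)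

variable (e1 e2 : A)

/-- The canonical map `A → Ā`. -/
noncomputable def extι : A →ₐ[k] ExtAlg k A e1 e2 where
  toFun a := RingQuot.mkAlgHom k (FusionRel k A e1 e2) (FreeAlgebra.ι k (Sum.inl a))
  map_one' := by
    simpa using RingQuot.mkAlgHom_rel k
      (FusionRel.one (k := k) (A := A) (e1 := e1) (e2 := e2))
  map_mul' a b := by
    have h := RingQuot.mkAlgHom_rel k
      (FusionRel.mul (k := k) (A := A) (e1 := e1) (e2 := e2) a b)
    rw [map_mul] at h
    exact h.symm
  map_zero' := by
    have h := RingQuot.mkAlgHom_rel k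
      (FusionRel.smul (k := k) (A := A) (e1 := e1) (e2 := e2) 0 1)
    rw [map_smul, zero_smul, zero_smul] at h
    exact h.symm
  map_add' a b := by
    have h := RingQuot.mkAlgHom_rel k
      (FusionRel.add (k := k) (A := A) (e1 := e1) (e2 := e2) a b)
    rw [map_add] at h
    exact h.symm
  commutes' c := by
    have h := RingQuot.mkAlgHom_rel k
      (FusionRel.smul (k := k) (A := A) (e1 := e1) (e2 := e2) c 1)
    have h1 : (RingQuot.mkAlgHom k (FusionRel k A e1 e2))
        (FreeAlgebra.ι k (Sum.inl (1 : A))) = 1 := by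
      simpa using RingQuot.mkAlgHom_rel k
        (FusionRel.one (k := k) (A := A) (e1 := e1) (e2 := e2))
    rw [map_smul, h1] at h
    rw [Algebra.algebraMap_eq_smul_one, Algebra.algebraMap_eq_smul_one]
    exact h.symm

/-- The matrix unit `e₁₂ ∈ Ā`. -/
noncomputable def ext12 : ExtAlg k A e1 e2 :=
  RingQuot.mkAlgHom k (FusionRel k A e1 e2) (FreeAlgebra.ι k (Sum.inr 0))

/-- The matrix unit `e₂₁ ∈ Ā`. -/
noncomputable def ext21 : ExtAlg k A e1 e2 :=
  RingQuot.mkAlgHom k (FusionRel k A e1 e2) (FreeAlgebra.ι k (Sum.inr 1))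

/-- The idempotent `ε = 1 − e₂ ∈ Ā`; the fusion algebra is the corner
`A^f = ε Ā ε`. -/
noncomputable def extEps : ExtAlg k A e1 e2 := 1 - extι k A e1 e2 e2

variable {k A e1 e2}

/-- Membership in the fusion algebra `A^f = ε Ā ε ⊆ Ā`. -/
def InCorner (x : ExtAlg k A e1 e2) : Prop :=
  extEps k A e1 e2 * x * extEps k A e1 e2 = x

end Fusion

/-- The data of a double bracket on the corner algebra `A^f = ε Ā ε` (whose unit is
`ε`), recorded as a bilinear map on `Ā`: it is cyclically antisymmetric, satisfies the
derivation rule on corner elements, and takes corner values on corner elements. -/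
structure CornerDoubleBracket (k R : Type*) [Field k] [Ring R] [Algebra k R]
    (ε : R) where
  br : R →ₗ[k] R →ₗ[k] R ⊗[k] R
  antisymm : ∀ a b : R, br a b = - (TensorProduct.comm k R R) (br b a)
  deriv : ∀ a b c : R, ε * a * ε = a → ε * b * ε = b → ε * c * ε = c →
    br a (b * c) = br a b * ((1 : R) ⊗ₜ[k] c) + (b ⊗ₜ[k] (1 : R)) * br a c
  corner_val : ∀ a b : R, ε * a * ε = a → ε * b * ε = b →
    br a b = (ε ⊗ₜ[k] ε) * br a b * (ε ⊗ₜ[k] ε)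

section GaugeTr

variable {k : Type*} [Field k] {A : Type*} [Ring A] [Algebra k A] {e1 e2 : A}

/-- The property of being (the extension to `Ā` of) the gauge element `E_s`: a double
derivation of `Ā` vanishing on `B̄` and given on `A` by
`E_s(a) = a e_s ⊗ e_s − e_s ⊗ e_s a`. -/
structure IsGaugeExt (es : A) (δ : ExtAlg k A e1 e2 →ₗ[k]
    ExtAlg k A e1 e2 ⊗[k] ExtAlg k A e1 e2) : Prop where
  leib : ∀ x y : ExtAlg k A e1 e2,
    δ (x * y) = δ x * ((1 : ExtAlg k A e1 e2) ⊗ₜ[k] y)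
      + (x ⊗ₜ[k] (1 : ExtAlg k A e1 e2)) * δ y
  on_A : ∀ a : A, δ (extι k A e1 e2 a) =
    (extι k A e1 e2 (a * es)) ⊗ₜ[k] (extι k A e1 e2 es)
      - (extι k A e1 e2 es) ⊗ₜ[k] (extι k A e1 e2 (es * a))
  on_e12 : δ (ext12 k A e1 e2) = 0
  on_e21 : δ (ext21 k A e1 e2) = 0

/-- The trace map on double derivations:
`Tr(δ)(a) = δ(a)'ε ⊗ εδ(a)'' + δ(a)'e₂₁ε ⊗ εe₁₂δ(a)''`. -/
noncomputable def TrOf (δ : ExtAlg k A e1 e2 →ₗ[k]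
    ExtAlg k A e1 e2 ⊗[k] ExtAlg k A e1 e2) :
    ExtAlg k A e1 e2 →ₗ[k] ExtAlg k A e1 e2 ⊗[k] ExtAlg k A e1 e2 :=
  (TensorProduct.map (LinearMap.mulRight k (extEps k A e1 e2))
      (LinearMap.mulLeft k (extEps k A e1 e2))).comp δ
    + (TensorProduct.map
        (LinearMap.mulRight k (ext21 k A e1 e2 * extEps k A e1 e2))
        (LinearMap.mulLeft k (extEps k A e1 e2 * ext12 k A e1 e2))).comp δ

end GaugeTr

/-- The bilinear operation `(x₁⊗x₂, y₁⊗y₂) ↦ (y₁x₂) ⊗ (x₁y₂)`; in Sweedler notation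
`sweedlerOp x y = y' x'' ⊗ x' y''`. -/
noncomputable def sweedlerOp (k A : Type*) [CommRing k] [Ring A] [Algebra k A] :
    (A ⊗[k] A) →ₗ[k] (A ⊗[k] A) →ₗ[k] (A ⊗[k] A) :=
  TensorProduct.lift (LinearMap.mk₂ k
    (fun x₁ x₂ => TensorProduct.map (LinearMap.mulRight k x₂) (LinearMap.mulLeft k x₁))
    (fun m₁ m₂ n => by
      have h : LinearMap.mulLeft k (m₁ + m₂) =
          LinearMap.mulLeft k m₁ + LinearMap.mulLeft k m₂ :=
        LinearMap.ext fun x => add_mul m₁ m₂ x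
      try dsimp only
      rw [h, TensorProduct.map_add_right])
    (fun c m n => by
      have h : LinearMap.mulLeft k (c • m) = c • LinearMap.mulLeft k m :=
        LinearMap.ext fun x => smul_mul_assoc c m x
      try dsimp only
      rw [h, TensorProduct.map_smul_right])
    (fun m n₁ n₂ => by
      have h : LinearMap.mulRight k (n₁ + n₂) =
          LinearMap.mulRight k n₁ + LinearMap.mulRight k n₂ :=
        LinearMap.ext fun x => mul_add x n₁ n₂
      try dsimp only
      rw [h, TensorProduct.map_add_left])
    (fun c m n => by
      have h : LinearMap.mulRight k (c • n) = c • LinearMap.mulRight k n :=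
        LinearMap.ext fun x => mul_smul_comm c x n
      try dsimp only
      rw [h, TensorProduct.map_smul_left]))

section FusBr

variable {k : Type*} [Field k] {A : Type*} [Ring A] [Algebra k A] {e1 e2 : A}

/-- The fusion double bracket associated to `−½ Tr(E₁)Tr(E₂)`:
`⟪a,b⟫_fus = −½ Tr(E₂)(b)'Tr(E₁)(a)'' ⊗ Tr(E₁)(a)'Tr(E₂)(b)''
            + ½ Tr(E₁)(b)'Tr(E₂)(a)'' ⊗ Tr(E₂)(a)'Tr(E₁)(b)''`. -/
noncomputable def fusBr
    (T1 T2 : ExtAlg k A e1 e2 →ₗ[k] ExtAlg k A e1 e2 ⊗[k] ExtAlg k A e1 e2) :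
    ExtAlg k A e1 e2 →ₗ[k] ExtAlg k A e1 e2 →ₗ[k]
      ExtAlg k A e1 e2 ⊗[k] ExtAlg k A e1 e2 :=
  LinearMap.mk₂ k
    (fun a b => (-(2⁻¹ : k)) • sweedlerOp k (ExtAlg k A e1 e2) (T1 a) (T2 b)
      + (2⁻¹ : k) • sweedlerOp k (ExtAlg k A e1 e2) (T2 a) (T1 b))
    (fun a₁ a₂ b => by
      simp only [map_add, LinearMap.add_apply, smul_add]
      abel)
    (fun c a b => by
      simp only [map_smul, LinearMap.smul_apply]
      rw [smul_comm (-(2⁻¹ : k)) c, smul_comm ((2⁻¹ : k)) c, smul_add])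
    (fun a b₁ b₂ => by
      simp only [map_add, smul_add]
      abel)
    (fun c a b => by
      simp only [map_smul]
      rw [smul_comm (-(2⁻¹ : k)) c, smul_comm ((2⁻¹ : k)) c, smul_add])

end FusBr

section Gens4

variable (k : Type*) [Field k] (A : Type*) [Ring A] [Algebra k A] (e1 e2 : A)

/-- First-type generator `ε ι(t) ε` of the fusion algebra. -/
noncomputable def gen1 (t : A) : ExtAlg k A e1 e2 :=
  extEps k A e1 e2 * extι k A e1 e2 t * extEps k A e1 e2

/-- Second-type generator `e₁₂ ι(u) ε`. -/
noncomputable def gen2 (u : A) : ExtAlg k A e1 e2 :=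
  ext12 k A e1 e2 * extι k A e1 e2 u * extEps k A e1 e2

/-- Third-type generator `ε ι(v) e₂₁`. -/
noncomputable def gen3 (v : A) : ExtAlg k A e1 e2 :=
  extEps k A e1 e2 * extι k A e1 e2 v * ext21 k A e1 e2

/-- Fourth-type generator `e₁₂ ι(w) e₂₁`. -/
noncomputable def gen4 (w : A) : ExtAlg k A e1 e2 :=
  ext12 k A e1 e2 * extι k A e1 e2 w * ext21 k A e1 e2

end Gens4

theorem mul_mul_eq_of_mul_eq {R : Type*} [Semigroup R] {a b c : R} (h : a * b = c) (x : R) :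
    a * (b * x) = c * x := by
  rw [← mul_assoc, h]

section Relations

variable {k : Type*} [Field k] {A : Type*} [Ring A] [Algebra k A] {e1 e2 : A}

theorem ext12_mul_ext21 : ext12 k A e1 e2 * ext21 k A e1 e2 = extι k A e1 e2 e1 := by
  rw [ext12, ext21, ← map_mul]
  exact RingQuot.mkAlgHom_rel k .mul1221

theorem extι_e1_mul_ext12 : extι k A e1 e2 e1 * ext12 k A e1 e2 = ext12 k A e1 e2 := by
  rw [ext12]
  exact (map_mul _ _ _).symm.trans (RingQuot.mkAlgHom_rel k .e1mul12)

theorem ext12_mul_extι_e2 : ext12 k A e1 e2 * extι k A e1 e2 e2 = ext12 k A e1 e2 := by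
  rw [ext12]
  exact (map_mul _ _ _).symm.trans (RingQuot.mkAlgHom_rel k .mul12e2)

theorem extι_e2_mul_ext21 : extι k A e1 e2 e2 * ext21 k A e1 e2 = ext21 k A e1 e2 := by
  rw [ext21]
  exact (map_mul _ _ _).symm.trans (RingQuot.mkAlgHom_rel k .e2mul21)

theorem ext21_mul_extι_e1 : ext21 k A e1 e2 * extι k A e1 e2 e1 = ext21 k A e1 e2 := by
  rw [ext21]
  exact (map_mul _ _ _).symm.trans (RingQuot.mkAlgHom_rel k .mul21e1)

theorem ext12_mul_extEps : ext12 k A e1 e2 * extEps k A e1 e2 = 0 := by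
  rw [extEps, mul_sub, mul_one, ext12_mul_extι_e2, sub_self]

theorem extEps_mul_ext21 : extEps k A e1 e2 * ext21 k A e1 e2 = 0 := by
  rw [extEps, sub_mul, one_mul, extι_e2_mul_ext21, sub_self]

theorem extι_mul_extι_of_mul_eq_zero {a b : A} (h : a * b = 0) :
    extι k A e1 e2 a * extι k A e1 e2 b = 0 := by
  rw [← map_mul, h, map_zero]

theorem ext12_mul_extι_e1 (h21 : e2 * e1 = 0) : ext12 k A e1 e2 * extι k A e1 e2 e1 = 0 := by
  rw [← ext12_mul_extι_e2, mul_assoc, extι_mul_extι_of_mul_eq_zero h21, mul_zero]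

theorem extι_e1_mul_ext21 (h12 : e1 * e2 = 0) : extι k A e1 e2 e1 * ext21 k A e1 e2 = 0 := by
  rw [← extι_e2_mul_ext21, ← mul_assoc, extι_mul_extι_of_mul_eq_zero h12, zero_mul]

theorem extEps_mul_extι_e1 (h21 : e2 * e1 = 0) :
    extEps k A e1 e2 * extι k A e1 e2 e1 = extι k A e1 e2 e1 := by
  rw [extEps, sub_mul, one_mul, extι_mul_extι_of_mul_eq_zero h21, sub_zero]

theorem extι_e1_mul_extEps (h12 : e1 * e2 = 0) :
    extι k A e1 e2 e1 * extEps k A e1 e2 = extι k A e1 e2 e1 := by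
  rw [extEps, mul_sub, mul_one, extι_mul_extι_of_mul_eq_zero h12, sub_zero]

theorem extEps_mul_extι_e2 (h2 : IsIdempotentElem e2) :
    extEps k A e1 e2 * extι k A e1 e2 e2 = 0 := by
  rw [extEps, sub_mul, one_mul, ← map_mul, h2.eq, sub_self]

theorem extι_e2_mul_extEps (h2 : IsIdempotentElem e2) :
    extι k A e1 e2 e2 * extEps k A e1 e2 = 0 := by
  rw [extEps, mul_sub, mul_one, ← map_mul, h2.eq, sub_self]

theorem extEps_mul_ext12 (h21 : e2 * e1 = 0) :
    extEps k A e1 e2 * ext12 k A e1 e2 = ext12 k A e1 e2 := by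
  rw [← extι_e1_mul_ext12, ← mul_assoc, extEps_mul_extι_e1 h21]

theorem ext21_mul_extEps (h12 : e1 * e2 = 0) :
    ext21 k A e1 e2 * extEps k A e1 e2 = ext21 k A e1 e2 := by
  rw [← ext21_mul_extι_e1, mul_assoc, extι_e1_mul_extEps h12]

theorem extι_e1_mul_gen2 (u : A) :
    extι k A e1 e2 e1 * gen2 k A e1 e2 u = gen2 k A e1 e2 u := by
  simp only [gen2, ← mul_assoc, extι_e1_mul_ext12]

theorem extι_e1_mul_gen4 (w : A) :
    extι k A e1 e2 e1 * gen4 k A e1 e2 w = gen4 k A e1 e2 w := by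
  simp only [gen4, ← mul_assoc, extι_e1_mul_ext12]

theorem gen3_mul_extι_e1 (v : A) :
    gen3 k A e1 e2 v * extι k A e1 e2 e1 = gen3 k A e1 e2 v := by
  rw [gen3, mul_assoc, ext21_mul_extι_e1]

theorem gen4_mul_extι_e1 (w : A) :
    gen4 k A e1 e2 w * extι k A e1 e2 e1 = gen4 k A e1 e2 w := by
  rw [gen4, mul_assoc, ext21_mul_extι_e1]

end Relations

section Gauge

variable {k : Type*} [Field k] {A : Type*} [Ring A] [Algebra k A] {e1 e2 es : A}
  {δ : ExtAlg k A e1 e2 →ₗ[k] ExtAlg k A e1 e2 ⊗[k] ExtAlg k A e1 e2}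

theorem IsGaugeExt.map_one (hδ : IsGaugeExt es δ) : δ 1 = 0 := by
  -- The additive structures on `Ā ⊗ Ā` coming from `Semiring Ā` and from `Ring Ā` agree only
  -- up to unfolding, so ring lemmas need this instance spelled out; elsewhere `abel` absorbs it.
  let : Ring (ExtAlg k A e1 e2 ⊗[k] ExtAlg k A e1 e2) := inferInstance
  have h := hδ.leib 1 1
  rw [mul_one, ← Algebra.TensorProduct.one_def, mul_one, one_mul] at h
  exact left_eq_add.mp h

theorem IsGaugeExt.map_extEps_of_e1 (hδ : IsGaugeExt e1 δ) (h12 : e1 * e2 = 0)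
    (h21 : e2 * e1 = 0) : δ (extEps k A e1 e2) = 0 := by
  rw [extEps, map_sub, hδ.map_one, hδ.on_A, h21, h12, map_zero, zero_tmul, tmul_zero,
    sub_self, sub_self]

theorem IsGaugeExt.map_extEps_of_e2 (hδ : IsGaugeExt e2 δ) (h2 : IsIdempotentElem e2) :
    δ (extEps k A e1 e2) = 0 := by
  rw [extEps, map_sub, hδ.map_one, hδ.on_A, h2.eq, sub_self, sub_self]

theorem IsGaugeExt.map_mul_extι_mul (hδ : IsGaugeExt es δ) {x z : ExtAlg k A e1 e2}
    (hx : δ x = 0) (hz : δ z = 0) (a : A) :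
    δ (x * extι k A e1 e2 a * z) =
      (x * extι k A e1 e2 (a * es)) ⊗ₜ[k] (extι k A e1 e2 es * z)
      - (x * extι k A e1 e2 es) ⊗ₜ[k] (extι k A e1 e2 (es * a) * z) := by
  let : Ring (ExtAlg k A e1 e2 ⊗[k] ExtAlg k A e1 e2) := inferInstance
  rw [hδ.leib, hz, hδ.leib, hx, hδ.on_A, zero_mul, zero_add, mul_zero, add_zero, mul_sub,
    sub_mul, Algebra.TensorProduct.tmul_mul_tmul, Algebra.TensorProduct.tmul_mul_tmul,
    Algebra.TensorProduct.tmul_mul_tmul, Algebra.TensorProduct.tmul_mul_tmul, one_mul,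
    mul_one, one_mul, mul_one]

theorem TrOf_apply_of_eq_tmul_sub_tmul (h12 : e1 * e2 = 0) (h21 : e2 * e1 = 0)
    (a : ExtAlg k A e1 e2) {p q p' q' : ExtAlg k A e1 e2} (ha : δ a = p ⊗ₜ[k] q - p' ⊗ₜ[k] q') :
    TrOf δ a = (p * extEps k A e1 e2) ⊗ₜ[k] (extEps k A e1 e2 * q)
      + (p * ext21 k A e1 e2) ⊗ₜ[k] (ext12 k A e1 e2 * q)
      - ((p' * extEps k A e1 e2) ⊗ₜ[k] (extEps k A e1 e2 * q')
        + (p' * ext21 k A e1 e2) ⊗ₜ[k] (ext12 k A e1 e2 * q')) := by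
  simp only [TrOf, LinearMap.add_apply, LinearMap.comp_apply, ha, map_sub, map_tmul,
    LinearMap.mulRight_apply, LinearMap.mulLeft_apply, ext21_mul_extEps h12,
    extEps_mul_ext12 h21]
  abel

end Gauge

section Trace

variable {k : Type*} [Field k] {A : Type*} [Ring A] [Algebra k A] {e1 e2 : A}
  {δ : ExtAlg k A e1 e2 →ₗ[k] ExtAlg k A e1 e2 ⊗[k] ExtAlg k A e1 e2}

theorem TrOf_mul_extι_mul_of_gauge_e1 (hδ : IsGaugeExt e1 δ) (h12 : e1 * e2 = 0)
    (h21 : e2 * e1 = 0) {x z : ExtAlg k A e1 e2} (hx : δ x = 0) (hz : δ z = 0) (a : A) :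
    TrOf δ (x * extι k A e1 e2 a * z) =
      (x * extι k A e1 e2 a * extι k A e1 e2 e1) ⊗ₜ[k] (extι k A e1 e2 e1 * z)
      - (x * extι k A e1 e2 e1) ⊗ₜ[k] (extι k A e1 e2 e1 * extι k A e1 e2 a * z) := by
  rw [TrOf_apply_of_eq_tmul_sub_tmul h12 h21 _ (hδ.map_mul_extι_mul hx hz a)]
  simp only [map_mul, mul_assoc, extι_e1_mul_extEps h12, extι_e1_mul_ext21 h12,
    mul_mul_eq_of_mul_eq (extEps_mul_extι_e1 h21), mul_mul_eq_of_mul_eq (ext12_mul_extι_e1 h21),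
    mul_zero, zero_mul, zero_tmul, add_zero]

theorem TrOf_mul_extι_mul_of_gauge_e2 (hδ : IsGaugeExt e2 δ) (h12 : e1 * e2 = 0)
    (h21 : e2 * e1 = 0) (h2 : IsIdempotentElem e2) {x z : ExtAlg k A e1 e2} (hx : δ x = 0)
    (hz : δ z = 0) (a : A) :
    TrOf δ (x * extι k A e1 e2 a * z) =
      (x * extι k A e1 e2 a * ext21 k A e1 e2) ⊗ₜ[k] (ext12 k A e1 e2 * z)
      - (x * ext21 k A e1 e2) ⊗ₜ[k] (ext12 k A e1 e2 * extι k A e1 e2 a * z) := by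
  rw [TrOf_apply_of_eq_tmul_sub_tmul h12 h21 _ (hδ.map_mul_extι_mul hx hz a)]
  simp only [map_mul, mul_assoc, extι_e2_mul_extEps h2, extι_e2_mul_ext21,
    mul_mul_eq_of_mul_eq (extEps_mul_extι_e2 h2), mul_mul_eq_of_mul_eq ext12_mul_extι_e2,
    mul_zero, zero_tmul, zero_add]

theorem TrOf_gen1_of_gauge_e1 (hδ : IsGaugeExt e1 δ) (h12 : e1 * e2 = 0) (h21 : e2 * e1 = 0)
    (t : A) :
    TrOf δ (gen1 k A e1 e2 t) =
      (gen1 k A e1 e2 t * extι k A e1 e2 e1) ⊗ₜ[k] extι k A e1 e2 e1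
      - extι k A e1 e2 e1 ⊗ₜ[k] (extι k A e1 e2 e1 * gen1 k A e1 e2 t) := by
  have hε := hδ.map_extEps_of_e1 h12 h21
  rw [gen1, TrOf_mul_extι_mul_of_gauge_e1 hδ h12 h21 hε hε]
  simp only [mul_assoc, extι_e1_mul_extEps h12, extEps_mul_extι_e1 h21,
    mul_mul_eq_of_mul_eq (extι_e1_mul_extEps h12)]

theorem TrOf_gen2_of_gauge_e1 (hδ : IsGaugeExt e1 δ) (h12 : e1 * e2 = 0) (h21 : e2 * e1 = 0)
    (u : A) :
    TrOf δ (gen2 k A e1 e2 u) =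
      (gen2 k A e1 e2 u * extι k A e1 e2 e1) ⊗ₜ[k] extι k A e1 e2 e1 := by
  have hε := hδ.map_extEps_of_e1 h12 h21
  rw [gen2, TrOf_mul_extι_mul_of_gauge_e1 hδ h12 h21 hδ.on_e12 hε, ext12_mul_extι_e1 h21,
    zero_tmul]
  simp only [mul_assoc, extι_e1_mul_extEps h12, extEps_mul_extι_e1 h21]
  abel

theorem TrOf_gen3_of_gauge_e1 (hδ : IsGaugeExt e1 δ) (h12 : e1 * e2 = 0) (h21 : e2 * e1 = 0)
    (v : A) :
    TrOf δ (gen3 k A e1 e2 v) =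
      -(extι k A e1 e2 e1 ⊗ₜ[k] (extι k A e1 e2 e1 * gen3 k A e1 e2 v)) := by
  have hε := hδ.map_extEps_of_e1 h12 h21
  rw [gen3, TrOf_mul_extι_mul_of_gauge_e1 hδ h12 h21 hε hδ.on_e21, extι_e1_mul_ext21 h12,
    tmul_zero, extEps_mul_extι_e1 h21]
  simp only [mul_assoc, mul_mul_eq_of_mul_eq (extι_e1_mul_extEps h12)]
  abel

theorem TrOf_gen4_of_gauge_e1 (hδ : IsGaugeExt e1 δ) (h12 : e1 * e2 = 0) (h21 : e2 * e1 = 0)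
    (w : A) :
    TrOf δ (gen4 k A e1 e2 w) = 0 := by
  rw [gen4, TrOf_mul_extι_mul_of_gauge_e1 hδ h12 h21 hδ.on_e12 hδ.on_e21,
    extι_e1_mul_ext21 h12, ext12_mul_extι_e1 h21, tmul_zero, zero_tmul]
  abel

theorem TrOf_gen1_of_gauge_e2 (hδ : IsGaugeExt e2 δ) (h12 : e1 * e2 = 0) (h21 : e2 * e1 = 0)
    (h2 : IsIdempotentElem e2) (t : A) :
    TrOf δ (gen1 k A e1 e2 t) = 0 := by
  have hε := hδ.map_extEps_of_e2 h2
  rw [gen1, TrOf_mul_extι_mul_of_gauge_e2 hδ h12 h21 h2 hε hε, ext12_mul_extEps,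
    extEps_mul_ext21, tmul_zero, zero_tmul]
  abel

theorem TrOf_gen2_of_gauge_e2 (hδ : IsGaugeExt e2 δ) (h12 : e1 * e2 = 0) (h21 : e2 * e1 = 0)
    (h2 : IsIdempotentElem e2) (u : A) :
    TrOf δ (gen2 k A e1 e2 u) = -(extι k A e1 e2 e1 ⊗ₜ[k] gen2 k A e1 e2 u) := by
  have hε := hδ.map_extEps_of_e2 h2
  rw [gen2, TrOf_mul_extι_mul_of_gauge_e2 hδ h12 h21 h2 hδ.on_e12 hε, ext12_mul_extEps,
    tmul_zero, ext12_mul_ext21]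
  abel

theorem TrOf_gen3_of_gauge_e2 (hδ : IsGaugeExt e2 δ) (h12 : e1 * e2 = 0) (h21 : e2 * e1 = 0)
    (h2 : IsIdempotentElem e2) (v : A) :
    TrOf δ (gen3 k A e1 e2 v) = gen3 k A e1 e2 v ⊗ₜ[k] extι k A e1 e2 e1 := by
  have hε := hδ.map_extEps_of_e2 h2
  rw [gen3, TrOf_mul_extι_mul_of_gauge_e2 hδ h12 h21 h2 hε hδ.on_e21, extEps_mul_ext21,
    zero_tmul, ext12_mul_ext21]
  abel

theorem TrOf_gen4_of_gauge_e2 (hδ : IsGaugeExt e2 δ) (h12 : e1 * e2 = 0) (h21 : e2 * e1 = 0)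
    (h2 : IsIdempotentElem e2) (w : A) :
    TrOf δ (gen4 k A e1 e2 w) =
      gen4 k A e1 e2 w ⊗ₜ[k] extι k A e1 e2 e1 - extι k A e1 e2 e1 ⊗ₜ[k] gen4 k A e1 e2 w := by
  rw [gen4, TrOf_mul_extι_mul_of_gauge_e2 hδ h12 h21 h2 hδ.on_e12 hδ.on_e21, ext12_mul_ext21]

end Trace

theorem sweedlerOp_tmul {k R : Type*} [CommRing k] [Ring R] [Algebra k R] (x₁ x₂ y₁ y₂ : R) :
    sweedlerOp k R (x₁ ⊗ₜ[k] x₂) (y₁ ⊗ₜ[k] y₂) = (y₁ * x₂) ⊗ₜ[k] (x₁ * y₂) := by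
  simp [sweedlerOp]

theorem fusBr_apply {k : Type*} [Field k] {A : Type*} [Ring A] [Algebra k A] {e1 e2 : A}
    (T1 T2 : ExtAlg k A e1 e2 →ₗ[k] ExtAlg k A e1 e2 ⊗[k] ExtAlg k A e1 e2)
    (a b : ExtAlg k A e1 e2) :
    fusBr T1 T2 a b = (-(2⁻¹ : k)) • sweedlerOp k (ExtAlg k A e1 e2) (T1 a) (T2 b)
      + (2⁻¹ : k) • sweedlerOp k (ExtAlg k A e1 e2) (T2 a) (T1 b) :=
  rfl

theorem statement11_general (k : Type*) [Field k]
    (A : Type*) [Ring A] [Algebra k A]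
    (I : Type*) [DecidableEq I] (e : I → A)
    (horth : ∀ s t : I, e s * e t = if s = t then e s else 0)
    (i1 i2 : I) (h12 : i1 ≠ i2)
    (E1 E2 : ExtAlg k A (e i1) (e i2) →ₗ[k]
      ExtAlg k A (e i1) (e i2) ⊗[k] ExtAlg k A (e i1) (e i2))
    (hE1 : IsGaugeExt (e i1) E1) (hE2 : IsGaugeExt (e i2) E2) :
    -- abbreviations : `F` is the fusion bracket, `G1,...,G4` the generators,
    -- `E` is the idempotent `e₁ ∈ A^f`.
    ∀ F, F = fusBr (TrOf E1) (TrOf E2) →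
    ∀ G1 G2 G3 G4, G1 = gen1 k A (e i1) (e i2) → G2 = gen2 k A (e i1) (e i2) →
      G3 = gen3 k A (e i1) (e i2) → G4 = gen4 k A (e i1) (e i2) →
    ∀ E : ExtAlg k A (e i1) (e i2), E = extι k A (e i1) (e i2) (e i1) →
    (∀ t t' : A, F (G1 t) (G1 t') = 0) ∧
    (∀ t u : A, F (G1 t) (G2 u) =
      (2⁻¹ : k) • (E ⊗ₜ[k] (G1 t * G2 u) - (E * G1 t) ⊗ₜ[k] G2 u)) ∧
    (∀ t v : A, F (G1 t) (G3 v) =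
      (2⁻¹ : k) • ((G3 v * G1 t) ⊗ₜ[k] E - G3 v ⊗ₜ[k] (G1 t * E))) ∧
    (∀ t w : A, F (G1 t) (G4 w) =
      (2⁻¹ : k) • ((G4 w * G1 t) ⊗ₜ[k] E + E ⊗ₜ[k] (G1 t * G4 w)
        - G4 w ⊗ₜ[k] (G1 t * E) - (E * G1 t) ⊗ₜ[k] G4 w)) ∧
    (∀ u t : A, F (G2 u) (G1 t) =
      (2⁻¹ : k) • (G2 u ⊗ₜ[k] (E * G1 t) - (G1 t * G2 u) ⊗ₜ[k] E)) ∧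
    (∀ u u' : A, F (G2 u) (G2 u') =
      (2⁻¹ : k) • (E ⊗ₜ[k] (G2 u * G2 u') - (G2 u' * G2 u) ⊗ₜ[k] E)) ∧
    (∀ u v : A, F (G2 u) (G3 v) =
      (2⁻¹ : k) • (G2 u ⊗ₜ[k] (E * G3 v) - G3 v ⊗ₜ[k] (G2 u * E))) ∧
    (∀ u w : A, F (G2 u) (G4 w) =
      (2⁻¹ : k) • (E ⊗ₜ[k] (G2 u * G4 w) - G4 w ⊗ₜ[k] (G2 u * E))) ∧
    (∀ v t : A, F (G3 v) (G1 t) =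
      (2⁻¹ : k) • ((G1 t * E) ⊗ₜ[k] G3 v - E ⊗ₜ[k] (G3 v * G1 t))) ∧
    (∀ v u : A, F (G3 v) (G2 u) =
      (2⁻¹ : k) • ((G2 u * E) ⊗ₜ[k] G3 v - (E * G3 v) ⊗ₜ[k] G2 u)) ∧
    (∀ v v' : A, F (G3 v) (G3 v') =
      (2⁻¹ : k) • ((G3 v' * G3 v) ⊗ₜ[k] E - E ⊗ₜ[k] (G3 v * G3 v'))) ∧
    (∀ v w : A, F (G3 v) (G4 w) =
      (2⁻¹ : k) • ((G4 w * G3 v) ⊗ₜ[k] E - (E * G3 v) ⊗ₜ[k] G4 w)) ∧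
    (∀ w t : A, F (G4 w) (G1 t) =
      (2⁻¹ : k) • ((G1 t * E) ⊗ₜ[k] G4 w + G4 w ⊗ₜ[k] (E * G1 t)
        - (G1 t * G4 w) ⊗ₜ[k] E - E ⊗ₜ[k] (G4 w * G1 t))) ∧
    (∀ w u : A, F (G4 w) (G2 u) =
      (2⁻¹ : k) • ((G2 u * E) ⊗ₜ[k] G4 w - (G2 u * G4 w) ⊗ₜ[k] E)) ∧
    (∀ w v : A, F (G4 w) (G3 v) =
      (2⁻¹ : k) • (G4 w ⊗ₜ[k] (E * G3 v) - E ⊗ₜ[k] (G4 w * G3 v))) ∧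
    (∀ w w' : A, F (G4 w) (G4 w') = 0) := by
  intro F hF G1 G2 G3 G4 hG1 hG2 hG3 hG4 E hE
  subst hF hG1 hG2 hG3 hG4 hE
  have he := OrthogonalIdempotents.iff_mul_eq.mpr horth
  have o12 := he.ortho h12
  have o21 := he.ortho h12.symm
  have o2 := he.idem i2
  have hEE := ((he.idem i1).map (extι k A (e i1) (e i2))).eq
  refine ⟨?_, ?_, ?_, ?_, ?_, ?_, ?_, ?_, ?_, ?_, ?_, ?_, ?_, ?_, ?_, ?_⟩ <;> intro a b <;>
    simp only [fusBr_apply, TrOf_gen1_of_gauge_e1 hE1 o12 o21, TrOf_gen2_of_gauge_e1 hE1 o12 o21,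
      TrOf_gen3_of_gauge_e1 hE1 o12 o21, TrOf_gen4_of_gauge_e1 hE1 o12 o21,
      TrOf_gen1_of_gauge_e2 hE2 o12 o21 o2, TrOf_gen2_of_gauge_e2 hE2 o12 o21 o2,
      TrOf_gen3_of_gauge_e2 hE2 o12 o21 o2, TrOf_gen4_of_gauge_e2 hE2 o12 o21 o2,
      map_sub, map_neg, map_zero, LinearMap.sub_apply, LinearMap.neg_apply, LinearMap.zero_apply,
      sweedlerOp_tmul, mul_assoc, hEE, mul_mul_eq_of_mul_eq hEE, extι_e1_mul_gen2,
      extι_e1_mul_gen4, gen3_mul_extι_e1, gen4_mul_extι_e1,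
      mul_mul_eq_of_mul_eq (gen3_mul_extι_e1 _), mul_mul_eq_of_mul_eq (gen4_mul_extι_e1 _),
      smul_sub, smul_add, smul_neg, neg_smul, smul_zero] <;>
    abel

/-- The values of the fusion double bracket `⟪-,-⟫_fus` on the four
types of generators of the fusion algebra `A^f` (Lemma dbrFUS). -/
theorem statement11 (k : Type*) [Field k] [CharZero k]
    (A : Type*) [Ring A] [Algebra k A]
    (I : Type*) [Fintype I] [DecidableEq I] (e : I → A)
    (horth : ∀ s t : I, e s * e t = if s = t then e s else 0)
    (hsum : ∑ s : I, e s = 1)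
    (i1 i2 : I) (h12 : i1 ≠ i2)
    (E1 E2 : ExtAlg k A (e i1) (e i2) →ₗ[k]
      ExtAlg k A (e i1) (e i2) ⊗[k] ExtAlg k A (e i1) (e i2))
    (hE1 : IsGaugeExt (e i1) E1) (hE2 : IsGaugeExt (e i2) E2) :
    -- abbreviations : `F` is the fusion bracket, `G1,...,G4` the generators,
    -- `E` is the idempotent `e₁ ∈ A^f`.
    ∀ F, F = fusBr (TrOf E1) (TrOf E2) →
    ∀ G1 G2 G3 G4, G1 = gen1 k A (e i1) (e i2) → G2 = gen2 k A (e i1) (e i2) →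
      G3 = gen3 k A (e i1) (e i2) → G4 = gen4 k A (e i1) (e i2) →
    ∀ E : ExtAlg k A (e i1) (e i2), E = extι k A (e i1) (e i2) (e i1) →
    (∀ t t' : A, F (G1 t) (G1 t') = 0) ∧
    (∀ t u : A, F (G1 t) (G2 u) =
      (2⁻¹ : k) • (E ⊗ₜ[k] (G1 t * G2 u) - (E * G1 t) ⊗ₜ[k] G2 u)) ∧
    (∀ t v : A, F (G1 t) (G3 v) =
      (2⁻¹ : k) • ((G3 v * G1 t) ⊗ₜ[k] E - G3 v ⊗ₜ[k] (G1 t * E))) ∧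
    (∀ t w : A, F (G1 t) (G4 w) =
      (2⁻¹ : k) • ((G4 w * G1 t) ⊗ₜ[k] E + E ⊗ₜ[k] (G1 t * G4 w)
        - G4 w ⊗ₜ[k] (G1 t * E) - (E * G1 t) ⊗ₜ[k] G4 w)) ∧
    (∀ u t : A, F (G2 u) (G1 t) =
      (2⁻¹ : k) • (G2 u ⊗ₜ[k] (E * G1 t) - (G1 t * G2 u) ⊗ₜ[k] E)) ∧
    (∀ u u' : A, F (G2 u) (G2 u') =
      (2⁻¹ : k) • (E ⊗ₜ[k] (G2 u * G2 u') - (G2 u' * G2 u) ⊗ₜ[k] E)) ∧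
    (∀ u v : A, F (G2 u) (G3 v) =
      (2⁻¹ : k) • (G2 u ⊗ₜ[k] (E * G3 v) - G3 v ⊗ₜ[k] (G2 u * E))) ∧
    (∀ u w : A, F (G2 u) (G4 w) =
      (2⁻¹ : k) • (E ⊗ₜ[k] (G2 u * G4 w) - G4 w ⊗ₜ[k] (G2 u * E))) ∧
    (∀ v t : A, F (G3 v) (G1 t) =
      (2⁻¹ : k) • ((G1 t * E) ⊗ₜ[k] G3 v - E ⊗ₜ[k] (G3 v * G1 t))) ∧
    (∀ v u : A, F (G3 v) (G2 u) =
      (2⁻¹ : k) • ((G2 u * E) ⊗ₜ[k] G3 v - (E * G3 v) ⊗ₜ[k] G2 u)) ∧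
    (∀ v v' : A, F (G3 v) (G3 v') =
      (2⁻¹ : k) • ((G3 v' * G3 v) ⊗ₜ[k] E - E ⊗ₜ[k] (G3 v * G3 v'))) ∧
    (∀ v w : A, F (G3 v) (G4 w) =
      (2⁻¹ : k) • ((G4 w * G3 v) ⊗ₜ[k] E - (E * G3 v) ⊗ₜ[k] G4 w)) ∧
    (∀ w t : A, F (G4 w) (G1 t) =
      (2⁻¹ : k) • ((G1 t * E) ⊗ₜ[k] G4 w + G4 w ⊗ₜ[k] (E * G1 t)
        - (G1 t * G4 w) ⊗ₜ[k] E - E ⊗ₜ[k] (G4 w * G1 t))) ∧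
    (∀ w u : A, F (G4 w) (G2 u) =
      (2⁻¹ : k) • ((G2 u * E) ⊗ₜ[k] G4 w - (G2 u * G4 w) ⊗ₜ[k] E)) ∧
    (∀ w v : A, F (G4 w) (G3 v) =
      (2⁻¹ : k) • (G4 w ⊗ₜ[k] (E * G3 v) - E ⊗ₜ[k] (G4 w * G3 v))) ∧
    (∀ w w' : A, F (G4 w) (G4 w') = 0) :=
  statement11_general k A I e horth i1 i2 h12 E1 E2 hE1 hE2
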